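/- arXiv:2006.04880 — 2 statements merged into one kernel-verified Lean document; each statement's English description precedes it below -/
import Mathlib

section
/- Let A be an m×m complex matrix with ‖A‖ ≥ 1, let σ be a real number with |σ − ‖A/‖A‖_F‖| ≤ ε₁ where ε₁√m < 1, and set α = σ‖A‖_F/(1 − √m ε₁). Then ‖A‖ ≤ α ≤ ((1+√m ε₁)/(1−√m ε₁))·‖A‖. -/
open scoped Matrix.Norms.L2Operator

/-- The Frobenius norm of a complex matrix. -/
noncomputable def frobeniusNorm {m : ℕ} (A : Matrix (Fin m) (Fin m) ℂ) : ℝ :=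
  Real.sqrt (∑ i, ∑ j, ‖A i j‖ ^ 2)

/-!
Since `‖A / ‖A‖_F‖ = ‖A‖ / ‖A‖_F`, the hypothesis on `σ` says `|σ ‖A‖_F - ‖A‖| ≤ ε₁ ‖A‖_F`, and
`ε₁ ‖A‖_F ≤ √m ε₁ ‖A‖` by the comparison `‖A‖ ≤ ‖A‖_F ≤ √m ‖A‖` of the two norms. Hence
`σ ‖A‖_F` lies between `(1 - √m ε₁) ‖A‖` and `(1 + √m ε₁) ‖A‖`; divide by `1 - √m ε₁ > 0`.
The operator norm is bounded by the Frobenius norm row by row (Cauchy–Schwarz), and each column,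
being the image of a unit vector, has Euclidean norm at most `‖A‖`.
-/

namespace Matrix

variable {𝕜 m n : Type*} [RCLike 𝕜] [Fintype m] [Fintype n] [DecidableEq n]

lemma l2_opNorm_le_sqrt_sum_sq (A : Matrix m n 𝕜) : ‖A‖ ≤ √(∑ i, ∑ j, ‖A i j‖ ^ 2) := by
  rw [l2_opNorm_def]
  refine ContinuousLinearMap.opNorm_le_bound _ (by positivity) fun x => ?_
  have hrow : ∀ i, ‖(A *ᵥ x) i‖ ^ 2 ≤ (∑ j, ‖A i j‖ ^ 2) * ∑ j, ‖x j‖ ^ 2 := fun i =>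
    calc ‖(A *ᵥ x) i‖ ^ 2 ≤ (∑ j, ‖A i j‖ * ‖x j‖) ^ 2 := by
          gcongr
          exact (norm_sum_le _ _).trans_eq (by simp [norm_mul])
      _ ≤ _ := Finset.sum_mul_sq_le_sq_mul_sq _ _ _
  rw [EuclideanSpace.norm_eq x, ← Real.sqrt_mul (by positivity)]
  simp only [LinearEquiv.trans_apply, LinearMap.coe_toContinuousLinearMap',
    EuclideanSpace.norm_eq, ofLp_toLpLin, toLin'_apply]
  exact Real.sqrt_le_sqrt (by rw [Finset.sum_mul]; exact Finset.sum_le_sum fun i _ => hrow i)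

lemma sum_sq_norm_le_card_mul_l2_opNorm_sq (A : Matrix m n 𝕜) :
    ∑ i, ∑ j, ‖A i j‖ ^ 2 ≤ Fintype.card n * ‖A‖ ^ 2 := by
  have hcol : ∀ j, ∑ i, ‖A i j‖ ^ 2 ≤ ‖A‖ ^ 2 := fun j => by
    simpa [EuclideanSpace.norm_eq, Real.sqrt_le_iff] using
      A.l2_opNorm_mulVec (EuclideanSpace.single j 1)
  rw [Finset.sum_comm]
  exact (Finset.sum_le_sum fun j _ => hcol j).trans_eq (by simp)

end Matrix

lemma l2_opNorm_le_frobeniusNorm {m : ℕ} (A : Matrix (Fin m) (Fin m) ℂ) :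
    ‖A‖ ≤ frobeniusNorm A :=
  A.l2_opNorm_le_sqrt_sum_sq

lemma frobeniusNorm_le_sqrt_mul_l2_opNorm {m : ℕ} (A : Matrix (Fin m) (Fin m) ℂ) :
    frobeniusNorm A ≤ √m * ‖A‖ := by
  rw [frobeniusNorm, ← Real.sqrt_sq (norm_nonneg A), ← Real.sqrt_mul m.cast_nonneg]
  simpa using Real.sqrt_le_sqrt A.sum_sq_norm_le_card_mul_l2_opNorm_sq

/-- In the junk case `b = 0` (where `b⁻¹ = 0`), `0 ≤ a ≤ b` forces `a = 0`. -/
lemma abs_mul_sub_le_of_abs_sub_inv_mul_le {a b σ ε : ℝ} (ha : 0 ≤ a) (hab : a ≤ b)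
    (h : |σ - b⁻¹ * a| ≤ ε) : |σ * b - a| ≤ ε * b := by
  obtain hb₀ | hb₀ := (ha.trans hab).lt_or_eq
  · calc |σ * b - a| = |σ - b⁻¹ * a| * b := by
          rw [← abs_of_pos hb₀, ← abs_mul, abs_of_pos hb₀]
          field_simp
      _ ≤ ε * b := by gcongr
  · subst hb₀
    simp [hab.antisymm ha]

theorem spectral_norm_approx_general {m : ℕ} (A : Matrix (Fin m) (Fin m) ℂ)
    (σ ε₁ : ℝ)
    (hσ : |σ - ‖(frobeniusNorm A)⁻¹ • A‖| ≤ ε₁)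
    (hε : ε₁ * Real.sqrt m < 1)
    (α : ℝ) (hα : α = σ * frobeniusNorm A / (1 - Real.sqrt m * ε₁)) :
    ‖A‖ ≤ α ∧ α ≤ (1 + Real.sqrt m * ε₁) / (1 - Real.sqrt m * ε₁) * ‖A‖ := by
  set F := frobeniusNorm A
  have hNF : ‖A‖ ≤ F := l2_opNorm_le_frobeniusNorm A
  have hFN : F ≤ √m * ‖A‖ := frobeniusNorm_le_sqrt_mul_l2_opNorm A
  have hε₁ : 0 ≤ ε₁ := (abs_nonneg _).trans hσ
  rw [norm_smul, Real.norm_of_nonneg (inv_nonneg.mpr ((norm_nonneg A).trans hNF))] at hσ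
  obtain ⟨hlo, hhi⟩ := abs_le.mp (abs_mul_sub_le_of_abs_sub_inv_mul_le (norm_nonneg A) hNF hσ)
  have hεF : ε₁ * F ≤ √m * ε₁ * ‖A‖ := by nlinarith
  have hpos : 0 < 1 - √m * ε₁ := by linarith
  subst hα
  constructor
  · rw [le_div_iff₀ hpos]
    linarith
  · rw [div_mul_eq_mul_div, div_le_div_iff_of_pos_right hpos]
    linarith

theorem spectral_norm_approx {m : ℕ} (A : Matrix (Fin m) (Fin m) ℂ)
    (hA : 1 ≤ ‖A‖) (σ ε₁ : ℝ)
    (hσ : |σ - ‖(frobeniusNorm A)⁻¹ • A‖| ≤ ε₁)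
    (hε : ε₁ * Real.sqrt m < 1)
    (α : ℝ) (hα : α = σ * frobeniusNorm A / (1 - Real.sqrt m * ε₁)) :
    ‖A‖ ≤ α ∧ α ≤ (1 + Real.sqrt m * ε₁) / (1 - Real.sqrt m * ε₁) * ‖A‖ :=
  spectral_norm_approx_general A σ ε₁ hσ hε α hα
end

section
/- Every permutation σ of {1,...,m} factors as σ = (1 τ(1))(2 τ(2))⋯(m τ(m)), where τ(i) is the first element of the sequence σ(i), σ²(i), σ³(i), ... that is ≥ i, and (i j) denotes the transposition swapping i and j (with (i i) = identity). -/
/-!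
If `σ` fixes every point below `j`, then `σ j ≥ j`, so `τ(j) = σ(j)`, and
`σ' = (j σ(j)) σ` fixes every point `≤ j`. Moreover `σ'` is `σ` with `j` cut out of its
cycle, so for `i > j` the `σ'`-orbit of `i` is the `σ`-orbit with `j` skipped; as `j < i`,
this does not change the first element `≥ i`, i.e. `τ_{σ'}(i) = τ_σ(i)`. Induction on `j`
gives `σ = (j τ(j)) σ' = (j τ(j)) (j+1 τ(j+1)) ⋯ (m-1 τ(m-1))`.
-/

/-- `tau σ i` is the first element of the sequence `σ i, σ² i, σ³ i, …` that is `≥ i`. -/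
noncomputable def tau {m : ℕ} (σ : Equiv.Perm (Fin m)) (i : Fin m) : Fin m :=
  (σ ^ Nat.find (⟨orderOf σ, orderOf_pos σ, by simp [pow_orderOf_eq_one]⟩ :
      ∃ k, 0 < k ∧ i ≤ (σ ^ k) i)) i

open Equiv Relation

section LinearOrder

variable {α : Type*} [LinearOrder α]

/-- `tau σ i` is the unique `y ≥ i` reachable from `σ i` by `belowStep σ i`
(`tau_eq_of_reflTransGen`): the walk along the orbit may only leave points `< i`. -/
def belowStep (σ : Perm α) (i : α) (x y : α) : Prop := x < i ∧ σ x = y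

variable {σ : Perm α} {a i : α}

theorem belowStep_rightUnique : Relator.RightUnique (belowStep σ i) :=
  fun _ _ _ hy hz => hy.2.symm.trans hz.2

theorem eq_of_reflTransGen_belowStep_of_le {y z : α} (h : ReflTransGen (belowStep σ i) y z)
    (hy : i ≤ y) : y = z :=
  h.cases_head.resolve_right fun ⟨_, hstep, _⟩ => hstep.1.not_ge hy

theorem reflTransGen_belowStep_unique {x y z : α} (hxy : ReflTransGen (belowStep σ i) x y)
    (hxz : ReflTransGen (belowStep σ i) x z) (hy : i ≤ y) (hz : i ≤ z) : y = z := by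
  rcases hxy.total_of_right_unique belowStep_rightUnique hxz with hyz | hzy
  · exact eq_of_reflTransGen_belowStep_of_le hyz hy
  · exact (eq_of_reflTransGen_belowStep_of_le hzy hz).symm

theorem swap_mul_apply_of_ne {x : α} (hx : x ≠ a) :
    (swap a (σ a) * σ) x = if σ x = a then σ a else σ x := by
  have : σ x ≠ σ a := σ.injective.ne hx
  split_ifs with h
  · simp [h]
  · simp [swap_apply_of_ne_of_ne h this]

theorem reflTransGen_belowStep_swap_mul {x y : α} (h : ReflTransGen (belowStep σ i) x y)
    (hy : y ≠ a) :
    ReflTransGen (belowStep (swap a (σ a) * σ) i) (if x = a then σ a else x) y := by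
  induction h using ReflTransGen.head_induction_on with
  | refl => rw [if_neg hy]
  | @head z _ hstep _ ih =>
    obtain ⟨hz, rfl⟩ := hstep
    by_cases hza : z = a
    · subst hza
      simpa using ih
    · rw [if_neg hza]
      exact .head ⟨hz, swap_mul_apply_of_ne hza⟩ ih

theorem le_apply_of_forall_lt_apply_eq (h : ∀ k < a, σ k = k) : a ≤ σ a := by
  by_contra! hlt
  exact hlt.ne (σ.injective (h _ hlt))

theorem swap_mul_apply_eq_of_le (h : ∀ k < a, σ k = k) {k : α} (hk : k ≤ a) :
    (swap a (σ a) * σ) k = k := by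
  rcases hk.lt_or_eq with hk | rfl
  · have : k ≠ σ a := (hk.trans_le (le_apply_of_forall_lt_apply_eq h)).ne
    rw [Perm.mul_apply, h k hk, swap_apply_of_ne_of_ne hk.ne this]
  · simp

end LinearOrder

theorem List.drop_ofFn_congr {β : Type*} {m j : ℕ} {f g : Fin m → β}
    (h : ∀ i : Fin m, j ≤ i → f i = g i) : (List.ofFn f).drop j = (List.ofFn g).drop j := by
  refine List.ext_getElem (by simp) fun p _ _ => ?_
  simp only [List.getElem_drop, List.getElem_ofFn]
  exact h _ (Nat.le_add_right j p)

section Tau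

variable {m : ℕ} (σ : Perm (Fin m)) (i : Fin m)

theorem exists_pos_le_pow_apply : ∃ k, 0 < k ∧ i ≤ (σ ^ k) i :=
  ⟨orderOf σ, orderOf_pos σ, by simp [pow_orderOf_eq_one]⟩

theorem tau_eq_pow_find : tau σ i = (σ ^ Nat.find (exists_pos_le_pow_apply σ i)) i := rfl

theorem le_tau : i ≤ tau σ i := (Nat.find_spec (exists_pos_le_pow_apply σ i)).2

theorem reflTransGen_belowStep_tau : ReflTransGen (belowStep σ i) (σ i) (tau σ i) := by
  have hex := exists_pos_le_pow_apply σ i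
  have hpath : ∀ l < Nat.find hex, ReflTransGen (belowStep σ i) (σ i) ((σ ^ (l + 1)) i) := by
    intro l hl
    induction l with
    | zero => simpa using .refl
    | succ l ih =>
      refine (ih (by omega)).tail ⟨not_le.1 fun h => Nat.find_min hex hl ⟨l.succ_pos, h⟩, ?_⟩
      rw [pow_succ' σ (l + 1), Perm.mul_apply]
  obtain ⟨l, hl⟩ := Nat.exists_eq_add_one_of_ne_zero (Nat.find_spec hex).1.ne'
  rw [tau_eq_pow_find, hl]
  exact hpath l (by omega)

variable {σ i}

theorem tau_eq_of_reflTransGen {y : Fin m} (hy : i ≤ y)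
    (h : ReflTransGen (belowStep σ i) (σ i) y) : tau σ i = y :=
  reflTransGen_belowStep_unique (reflTransGen_belowStep_tau σ i) h (le_tau σ i) hy

theorem tau_eq_apply_of_le (h : i ≤ σ i) : tau σ i = σ i :=
  tau_eq_of_reflTransGen h .refl

theorem tau_swap_mul_of_lt {a : Fin m} (ha : a < i) : tau (swap a (σ a) * σ) i = tau σ i := by
  refine tau_eq_of_reflTransGen (le_tau σ i) ?_
  rw [swap_mul_apply_of_ne ha.ne']
  exact reflTransGen_belowStep_swap_mul (reflTransGen_belowStep_tau σ i)
    (ha.trans_le (le_tau σ i)).ne'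

end Tau

theorem eq_prod_drop_swap_tau {m : ℕ} (σ : Perm (Fin m)) (j : ℕ)
    (hfix : ∀ k : Fin m, (k : ℕ) < j → σ k = k) :
    σ = ((List.ofFn fun i => swap i (tau σ i)).drop j).prod := by
  by_cases hj : j < m
  · set a : Fin m := ⟨j, hj⟩
    have hfix' : ∀ k < a, σ k = k := fun k hk => hfix k hk
    have ih := eq_prod_drop_swap_tau (swap a (σ a) * σ) (j + 1) fun k hk =>
      swap_mul_apply_eq_of_le hfix' (Nat.lt_succ_iff.1 hk)
    have htail : (List.ofFn fun i => swap i (tau (swap a (σ a) * σ) i)).drop (j + 1) =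
        (List.ofFn fun i => swap i (tau σ i)).drop (j + 1) :=
      List.drop_ofFn_congr fun i hi => by rw [tau_swap_mul_of_lt hi]
    rw [List.drop_eq_getElem_cons (by simpa), List.prod_cons, List.getElem_ofFn, ← htail, ← ih,
      tau_eq_apply_of_le (le_apply_of_forall_lt_apply_eq hfix'), ← mul_assoc, swap_mul_self,
      one_mul]
  · rw [List.drop_eq_nil_of_le (by simpa using not_lt.1 hj), List.prod_nil]
    ext k
    simp [hfix k (by omega)]
termination_by m - j

/-- Every permutation `σ` of `Fin m` factors as
`σ = (0 τ(0)) (1 τ(1)) ⋯ (m-1 τ(m-1))`, where in each transposition `(i τ(i))`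
the factor with smaller index `i` is applied first. -/
theorem perm_eq_prod_swaps_tau {m : ℕ} (σ : Equiv.Perm (Fin m)) :
    σ = (List.ofFn fun i => Equiv.swap i (tau σ i)).prod := by
  simpa using eq_prod_drop_swap_tau σ 0 (by simp)
end
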